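/- arXiv:1501.05506 — 2 statements merged into one kernel-verified Lean document; each statement's English description precedes it below -/
import Mathlib

section
/- Let μ be a measure on a measurable space 𝒳, let n ∈ ℕ, and let φ₁, …, φₙ and ψ₁, …, ψₙ be functions on 𝒳 such that all the integrals below converge. Then ∫_{𝒳ⁿ} det[φ_k(x_j)]_{j,k=1}^n · det[ψ_k(x_j)]_{j,k=1}^n dμ(x₁)⋯dμ(xₙ) = n! · det[ ∫_𝒳 φ_j(x) ψ_k(x) dμ(x) ]_{j,k=1}^n. -/
open MeasureTheory ProbabilityTheory Matrix
open scoped ComplexOrder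

noncomputable section

/-- The Vandermonde product `Δₙ(x) = ∏_{j<k} (x_k - x_j)`. -/
def vdm {n : ℕ} (x : Fin n → ℝ) : ℝ :=
  ∏ p ∈ Finset.univ.filter (fun p : Fin n × Fin n => p.1 < p.2), (x p.2 - x p.1)

/-- `x` enumerates the eigenvalues (with multiplicity) of the Hermitian matrix `A`. -/
def IsEigenvalueEnum {n : ℕ} (A : Matrix (Fin n) (Fin n) ℂ) (x : Fin n → ℝ) : Prop :=
  ∃ (hA : A.IsHermitian) (σ : Equiv.Perm (Fin n)), x = hA.eigenvalues ∘ σ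

/-- `x` enumerates the nonzero eigenvalues (with multiplicity) of the Hermitian `m × m`
matrix `A`, the remaining `m - n` eigenvalues being zero. -/
def IsNonzeroEigenvalueEnum {m n : ℕ} (A : Matrix (Fin m) (Fin m) ℂ) (x : Fin n → ℝ) : Prop :=
  (∀ i, x i ≠ 0) ∧ ∃ (hA : A.IsHermitian) (e : Fin m ≃ (Fin n ⊕ Fin (m - n))),
    ∀ i, hA.eigenvalues i = Sum.elim x (fun _ => (0 : ℝ)) (e i)

/-- `G` is a complex Ginibre random matrix: the real and imaginary parts of all entries are
mutually independent real Gaussians of mean `0` and variance `1/2`. -/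
def IsGinibre {Ω : Type*} [MeasureSpace Ω] {p q : ℕ} (G : Ω → Fin p → Fin q → ℂ) : Prop :=
  Measurable G ∧
  iIndepFun
    (fun idx : (Fin p × Fin q) × Bool => fun ω =>
      if idx.2 then (G ω idx.1.1 idx.1.2).re else (G ω idx.1.1 idx.1.2).im) volume ∧
  ∀ idx : (Fin p × Fin q) × Bool,
    Measure.map (fun ω => if idx.2 then (G ω idx.1.1 idx.1.2).re else (G ω idx.1.1 idx.1.2).im)
      volume = gaussianReal 0 (1 / 2)

/-- `v` is a standard complex Gaussian vector: the real and imaginary parts of all entries are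
mutually independent real Gaussians of mean `0` and variance `1/2`. -/
def IsStdCplxGaussianVec {Ω : Type*} [MeasureSpace Ω] {p : ℕ} (v : Ω → Fin p → ℂ) : Prop :=
  Measurable v ∧
  iIndepFun
    (fun idx : Fin p × Bool => fun ω =>
      if idx.2 then (v ω idx.1).re else (v ω idx.1).im) volume ∧
  ∀ idx : Fin p × Bool,
    Measure.map (fun ω => if idx.2 then (v ω idx.1).re else (v ω idx.1).im)
      volume = gaussianReal 0 (1 / 2)

/-- `U` is a Haar distributed random unitary matrix: it takes values in the unitary group and
its distribution is invariant under left multiplication by any fixed unitary matrix (this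
characterizes the normalized Haar measure on the compact group `U(m)`). -/
def IsHaarUnitary {Ω : Type*} [MeasureSpace Ω] {m : ℕ} (U : Ω → Fin m → Fin m → ℂ) : Prop :=
  Measurable U ∧ (∀ ω, Matrix.of (U ω) ∈ Matrix.unitaryGroup (Fin m) ℂ) ∧
  ∀ V ∈ Matrix.unitaryGroup (Fin m) ℂ,
    Measure.map (fun ω => Matrix.of.symm (V * Matrix.of (U ω))) volume = Measure.map U volume

/-- The `(n+1) × (n+1)` Hermitian matrix `[[X, v], [v*, c]]` obtained from `X` by appending the
column `v`, the row `v*` and the real corner entry `c`. -/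
def extMatrix {n : ℕ} (X : Matrix (Fin n) (Fin n) ℂ) (v : Fin n → ℂ) (c : ℝ) :
    Matrix (Fin (n + 1)) (Fin (n + 1)) ℂ :=
  Matrix.of (Fin.snoc (fun i => Fin.snoc (X i) (v i))
    (Fin.snoc (fun j => (starRingEnd ℂ) (v j)) (c : ℂ)))

/-!
Expanding both determinants over permutations `σ, τ`, every term of the integrand is a product
of functions of the separate variables `t j`, so by Fubini it integrates to `∏ j, M (σ j) (τ j)`
with `M = [∫ φⱼ ψₖ dμ]`. For fixed `σ` the sum over `τ` is the determinant of `M` with its rows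
permuted by `σ`, that is `sign σ * det M`; since `sign σ ^ 2 = 1`, summing over the `n!`
permutations `σ` gives `n! * det M`.
-/

open Equiv

namespace Matrix

variable {ι R : Type*} [Fintype ι] [DecidableEq ι] [CommRing R]

theorem det_mul_det_eq_sum_perm_perm (A B : Matrix ι ι R) :
    A.det * B.det = ∑ σ : Perm ι, ∑ τ : Perm ι,
      ((Perm.sign σ : ℤ) : R) * (Perm.sign τ : ℤ) * ∏ j, A j (σ j) * B j (τ j) := by
  rw [← det_transpose A, ← det_transpose B, det_apply', det_apply', Finset.sum_mul_sum]
  refine Finset.sum_congr rfl fun σ _ => Finset.sum_congr rfl fun τ _ => ?_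
  simp only [transpose_apply, Finset.prod_mul_distrib]
  ring

theorem sum_perm_perm_sign_mul_prod (M : Matrix ι ι R) :
    ∑ σ : Perm ι, ∑ τ : Perm ι,
      ((Perm.sign σ : ℤ) : R) * (Perm.sign τ : ℤ) * ∏ j, M (σ j) (τ j)
      = (Fintype.card ι).factorial * M.det := by
  have row_permuted_det (σ : Perm ι) :
      ∑ τ : Perm ι, ((Perm.sign τ : ℤ) : R) * ∏ j, M (σ j) (τ j) = Perm.sign σ * M.det := by
    rw [← det_permute, ← det_transpose, det_apply']
    rfl
  have sign_sq (σ : Perm ι) : ((Perm.sign σ : ℤ) : R) * Perm.sign σ = 1 := by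
    rw [← Int.cast_mul, ← Units.val_mul, Int.units_mul_self, Units.val_one, Int.cast_one]
  simp_rw [mul_assoc, ← Finset.mul_sum, row_permuted_det, ← mul_assoc, sign_sq, one_mul,
    Finset.sum_const, Finset.card_univ, Fintype.card_perm, nsmul_eq_mul]

end Matrix

theorem andreief_identity_general {𝒳 : Type*} [MeasurableSpace 𝒳] (μ : Measure 𝒳) [SigmaFinite μ]
    (n : ℕ) (φ ψ : Fin n → 𝒳 → ℝ)
    (hint : ∀ j k, Integrable (fun s => φ j s * ψ k s) μ) :
    ∫ t : Fin n → 𝒳,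
        (Matrix.of fun j k => φ k (t j)).det * (Matrix.of fun j k => ψ k (t j)).det
        ∂(Measure.pi fun _ => μ)
      = (n.factorial : ℝ) * (Matrix.of fun j k => ∫ s, φ j s * ψ k s ∂μ).det := by
  have integrable_term (σ τ : Perm (Fin n)) :
      Integrable (fun t : Fin n → 𝒳 => ∏ j, φ (σ j) (t j) * ψ (τ j) (t j))
        (Measure.pi fun _ => μ) :=
    Integrable.fintype_prod_dep fun j => hint (σ j) (τ j)
  calc _ = ∑ σ : Perm (Fin n), ∑ τ : Perm (Fin n), ((Perm.sign σ : ℤ) : ℝ) * (Perm.sign τ : ℤ) *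
          ∏ j, ∫ s, φ (σ j) s * ψ (τ j) s ∂μ := by
        simp_rw [det_mul_det_eq_sum_perm_perm, of_apply]
        rw [integral_finsetSum _ fun σ _ => integrable_finsetSum _ fun τ _ =>
          (integrable_term σ τ).const_mul _]
        refine Finset.sum_congr rfl fun σ _ => ?_
        rw [integral_finsetSum _ fun τ _ => (integrable_term σ τ).const_mul _]
        refine Finset.sum_congr rfl fun τ _ => ?_
        rw [integral_const_mul, integral_fintype_prod_eq_prod (fun j s => φ (σ j) s * ψ (τ j) s)]
    _ = _ := by
        simpa using sum_perm_perm_sign_mul_prod (of fun j k => ∫ s, φ j s * ψ k s ∂μ)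

/-- Andreief identity:
`∫ det[φₖ(x_j)] det[ψₖ(x_j)] dμ(x₁)⋯dμ(xₙ) = n! det[∫ φⱼ ψₖ dμ]`. -/
theorem andreief_identity {𝒳 : Type*} [MeasurableSpace 𝒳] (μ : Measure 𝒳) [SigmaFinite μ]
    (n : ℕ) (φ ψ : Fin n → 𝒳 → ℝ)
    (hφ : ∀ j, Measurable (φ j)) (hψ : ∀ k, Measurable (ψ k))
    (hint : ∀ j k, Integrable (fun s => φ j s * ψ k s) μ) :
    ∫ t : Fin n → 𝒳,
        (Matrix.of fun j k => φ k (t j)).det * (Matrix.of fun j k => ψ k (t j)).det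
        ∂(Measure.pi fun _ => μ)
      = (n.factorial : ℝ) * (Matrix.of fun j k => ∫ s, φ j s * ψ k s ∂μ).det :=
  andreief_identity_general μ n φ ψ hint
end
end

section
/- Let p ≥ 1 and let a₁ < a₂ < ⋯ < a_{p+1} be real numbers. Then ∫_{a₁}^{a₂} db₁ ⋯ ∫_{a_p}^{a_{p+1}} db_p · Δ_p(b)/Δ_{p+1}(a) = 1/p!, where the integral is over b = (b₁, …, b_p) with a_j ≤ b_j ≤ a_{j+1} for each j; in particular the value does not depend on a₁, …, a_{p+1}. -/
open MeasureTheory ProbabilityTheory Matrix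
open scoped ComplexOrder

noncomputable section

/-! `Δ_p(b)` is the determinant of `(b_j ^ k)_{k,j}`, whose `j`-th column depends on `b_j` only, so
by multilinearity and Fubini its integral over the box is the determinant of the column integrals
`∫_{a_j}^{a_{j+1}} t^k dt = (a_{j+1}^{k+1} - a_j^{k+1}) / (k+1)`. Pulling out the factors
`1/(k+1)` leaves `1/p!` times the determinant of the consecutive differences of the rows of the
Vandermonde matrix of `a`, which is `Δ_{p+1}(a)`. -/

open Matrix

theorem vdm_eq_det_vandermonde {n : ℕ} (x : Fin n → ℝ) : vdm x = (vandermonde x).det := by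
  rw [det_vandermonde, vdm, Finset.prod_filter, Fintype.prod_prod_type]
  refine Finset.prod_congr rfl fun i _ => ?_
  rw [← Finset.prod_filter]
  exact Finset.prod_congr (by ext j; simp) fun _ _ => rfl

theorem vdm_eq_det_pow {n : ℕ} (x : Fin n → ℝ) :
    vdm x = (of fun (k j : Fin n) => x j ^ (k : ℕ)).det := by
  rw [vdm_eq_det_vandermonde, ← det_transpose]
  rfl

theorem vdm_pos {n : ℕ} {x : Fin n → ℝ} (hx : StrictMono x) : 0 < vdm x :=
  Finset.prod_pos fun _ hq => sub_pos.mpr (hx (Finset.mem_filter.mp hq).2)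

theorem Matrix.det_vandermonde_eq_det_pow_succ_sub {R : Type*} [CommRing R] {n : ℕ}
    (a : Fin (n + 1) → R) :
    (vandermonde a).det =
      (of fun (k j : Fin n) => a j.succ ^ ((k : ℕ) + 1) - a j.castSucc ^ ((k : ℕ) + 1)).det := by
  set V := vandermonde a
  set B : Matrix (Fin (n + 1)) (Fin (n + 1)) R :=
    of (Fin.cases (V 0) fun i => V i.succ - V i.castSucc)
  have hVB : V.det = B.det :=
    det_eq_of_forall_row_eq_smul_add_pred (c := fun _ => 1) (fun _ => rfl) fun i j => by
      simp [B, V, vandermonde]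
  have hB : B.det = (B.submatrix Fin.succ Fin.succ).det := by
    rw [det_succ_column_zero, Fin.sum_univ_succ]
    simp [B, V, vandermonde, Fin.succAbove_zero]
  rw [hVB, hB, ← det_transpose]
  rfl

theorem MeasureTheory.integral_det_of_apply_pi {ι 𝕜 X : Type*} [Fintype ι] [DecidableEq ι]
    [RCLike 𝕜] [MeasurableSpace X] {μ : ι → Measure X} [∀ i, SigmaFinite (μ i)]
    (f : ι → X → 𝕜) (hf : ∀ k j, Integrable (f k) (μ j)) :
    ∫ x, (of fun k j => f k (x j)).det ∂Measure.pi μ = (of fun k j => ∫ t, f k t ∂μ j).det := by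
  simp only [det_apply', of_apply]
  rw [integral_finsetSum _ fun σ _ => (Integrable.fintype_prod fun j => hf (σ j) j).const_mul _]
  refine Finset.sum_congr rfl fun σ _ => ?_
  rw [integral_const_mul, integral_fintype_prod_eq_prod (fun j => f (σ j))]

theorem setIntegral_Icc_pow {x y : ℝ} (hxy : x ≤ y) (k : ℕ) :
    ∫ t in Set.Icc x y, t ^ k = (y ^ (k + 1) - x ^ (k + 1)) / (k + 1) := by
  rw [integral_Icc_eq_integral_Ioc, ← intervalIntegral.integral_of_le hxy, integral_pow]

theorem Fin.prod_univ_cast_add_one {R : Type*} [CommSemiring R] (n : ℕ) :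
    ∏ k : Fin n, ((k : R) + 1) = n.factorial := by
  rw [Fin.prod_univ_eq_prod_range (fun i => (i : R) + 1),
    ← Finset.prod_range_add_one_eq_factorial]
  push_cast
  rfl

theorem vandermonde_box_integral_general (p : ℕ) (a : Fin (p + 1) → ℝ)
    (ha : StrictMono a) :
    ∫ b in {b : Fin p → ℝ | ∀ j : Fin p, a j.castSucc ≤ b j ∧ b j ≤ a j.succ},
        vdm b / vdm a = 1 / (p.factorial : ℝ) := by
  have hbox : {b : Fin p → ℝ | ∀ j : Fin p, a j.castSucc ≤ b j ∧ b j ≤ a j.succ}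
      = Set.univ.pi fun j => Set.Icc (a j.castSucc) (a j.succ) := by
    ext b
    simp only [Set.mem_ofPred_eq, Set.mem_pi, Set.mem_univ, true_implies, Set.mem_Icc]
  have hint (k j : Fin p) :
      IntegrableOn (fun t : ℝ => t ^ (k : ℕ)) (Set.Icc (a j.castSucc) (a j.succ)) :=
    (continuous_pow _).integrableOn_Icc
  have hcols : (of fun (k j : Fin p) => ∫ t in Set.Icc (a j.castSucc) (a j.succ), t ^ (k : ℕ)) =
      diagonal (fun k : Fin p => ((k : ℝ) + 1)⁻¹) *
        of fun (k j : Fin p) => a j.succ ^ ((k : ℕ) + 1) - a j.castSucc ^ ((k : ℕ) + 1) := by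
    ext k j
    rw [of_apply, diagonal_mul, of_apply, setIntegral_Icc_pow (ha Fin.castSucc_lt_succ).le,
      div_eq_inv_mul]
  rw [hbox, integral_div, volume_pi, Measure.restrict_pi_pi]
  simp only [vdm_eq_det_pow (n := p)]
  rw [integral_det_of_apply_pi (fun (k : Fin p) (t : ℝ) => t ^ (k : ℕ)) hint, hcols, det_mul,
    det_diagonal, Finset.prod_inv_distrib, Fin.prod_univ_cast_add_one,
    ← det_vandermonde_eq_det_pow_succ_sub, ← vdm_eq_det_vandermonde]
  field_simp [(vdm_pos ha).ne']

/-- for `a₁ < a₂ < ⋯ < a_{p+1}`, the integral of `Δ_p(b)/Δ_{p+1}(a)` over the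
box `{b : a_j ≤ b_j ≤ a_{j+1}}` equals `1/p!`; in particular it does not depend on `a`. -/
theorem vandermonde_box_integral (p : ℕ) (hp : 1 ≤ p) (a : Fin (p + 1) → ℝ)
    (ha : StrictMono a) :
    ∫ b in {b : Fin p → ℝ | ∀ j : Fin p, a j.castSucc ≤ b j ∧ b j ≤ a j.succ},
        vdm b / vdm a = 1 / (p.factorial : ℝ) :=
  vandermonde_box_integral_general p a ha
end
end
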